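/- In any execution of the basic replication algorithm of Mu, if any log slot of any process contains a value v ≠ ⊥, then v is the input value (the proposed value) of some process. -/

import Mathlib

/-- An abstract execution of the basic replication algorithm of Mu, over `n`
processes and values of type `V`.  Time is discrete.  A log slot holds either
`none` (the empty value ⊥) or `some (b, v)`: a value `v` together with the
proposal number `b` it was accepted with. -/
structure MuExec (n : ℕ) (V : Type*) where
  /-- `log t p i`: the contents of slot `i` of process `p`'s log at time `t`. -/
  log : ℕ → Fin n → ℕ → Option (ℕ × V)
  /-- `input w = some v` iff process `w` invokes `Propose(v)` with input value
  `v`; `input w = none` if `w` never proposes. -/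
  input : Fin n → Option V
  /-- initially every log slot is empty (⊥) -/
  log_init : ∀ p i, log 0 p i = none
  /-- The only writes to log slots are accept-phase writes of adopted values:
  in one step, slot `i` of a log is either unchanged, or some leader writes
  into it a value `v` (with a proposal number `b`) which is either (a) that
  leader's own input value, or (b) a value the leader read (together with its
  proposal number) from slot `i` of some process's log at an earlier time,
  during its prepare phase. -/
  log_step : ∀ t p i, log (t + 1) p i = log t p i ∨
    ∃ b v, log (t + 1) p i = some (b, v) ∧
      ((∃ w, input w = some v) ∨
       (∃ t', t' ≤ t ∧ ∃ q : Fin n, ∃ b', log t' q i = some (b', v)))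

namespace MuExec

variable {n : ℕ} {V : Type*} (E : MuExec n V)

theorem input_or_earlier_of_log_succ_eq_some {t : ℕ} {p : Fin n} {i b : ℕ} {v : V}
    (h : E.log (t + 1) p i = some (b, v)) :
    (∃ w, E.input w = some v) ∨ ∃ t' ≤ t, ∃ q : Fin n, ∃ b', E.log t' q i = some (b', v) := by
  rcases E.log_step t p i with hsame | ⟨b', v', hwrite, hsource⟩
  · exact .inr ⟨t, le_rfl, p, b, hsame ▸ h⟩
  · obtain ⟨-, rfl⟩ := Prod.mk.inj (Option.some.inj (h.symm.trans hwrite))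
    exact hsource

end MuExec

/-- **Non-⊥ log values are inputs.** In any execution of the basic replication
algorithm of Mu, if any log slot of any process contains a value `v ≠ ⊥`, then
`v` is the input value (the proposed value) of some process. -/
theorem log_values_are_inputs {n : ℕ} {V : Type*} (E : MuExec n V)
    (t : ℕ) (p : Fin n) (i : ℕ) (b : ℕ) (v : V)
    (h : E.log t p i = some (b, v)) :
    ∃ w, E.input w = some v := by
  -- A prepare phase may read from any earlier time, hence strong induction.
  induction t using Nat.strong_induction_on generalizing p b with
  | _ t ih =>
    cases t with
    | zero => simp [E.log_init] at h
    | succ t =>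
      obtain hinput | ⟨t', ht', q, b', hq⟩ := E.input_or_earlier_of_log_succ_eq_some h
      · exact hinput
      · exact ih t' (Nat.lt_succ_of_le ht') q b' hq
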